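/- arXiv:2208.05553 — 7 statements merged into one kernel-verified Lean document; each statement's English description precedes it below -/
import Mathlib

section
/- Let z_1,...,z_n be mutually independent with z_j ~ Bernoulli(p_j), p_j ∈ (0,1), and fix a finite neighborhood N_i with treatment probabilities p_j. For any S' ⊆ N_i with |S'| ≤ β, the expectation E[ (∑_{S ⊆ N_i, |S| ≤ β} g(S) ∏_{j∈S} (z_j−p_j)/(p_j(1−p_j))) · ∏_{j'∈S'} z_{j'} ] equals 1 if S' is nonempty and 0 if S' = ∅, where g(S) = ∏_{s∈S}(1−p_s) − ∏_{s∈S}(−p_s) and g(∅) = 0. -/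
open Finset Real

/-- Value of a Bernoulli treatment bit as a real number. -/
noncomputable def zval : Bool → ℝ := fun b => if b then 1 else 0

/-- Expectation of `f` under `n` mutually independent Bernoulli(`p j`) bits. -/
noncomputable def bexp {n : ℕ} (p : Fin n → ℝ) (f : (Fin n → Bool) → ℝ) : ℝ :=
  ∑ z : Fin n → Bool, (∏ j, if z j then p j else 1 - p j) * f z

/-- The SNIPE coefficient function `g`. -/
noncomputable def gcoef {n : ℕ} (p : Fin n → ℝ) (S : Finset (Fin n)) : ℝ :=
  if S.Nonempty then (∏ s ∈ S, (1 - p s)) - ∏ s ∈ S, (-p s) else 0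

/-!
By linearity and independence, the moment `E[∏_{j∈S} (z_j - p_j)/(p_j(1 - p_j)) · ∏_{j∈S'} z_j]`
factorises over coordinates: a coordinate of `S \ S'` contributes the mean `0` of a centred bit,
one of `S ∩ S'` contributes `E[z_j (z_j - p_j)] / (p_j(1 - p_j)) = 1`, and one of `S' \ S`
contributes `p_j`. Hence only `S ⊆ S'` survives and the sum becomes
`∑_{S ⊆ S'} g(S) ∏_{j ∈ S' \ S} p_j`, which by the binomial expansion of products equals
`∏_{j∈S'} ((1 - p_j) + p_j) - ∏_{j∈S'} (-p_j + p_j)`.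
-/

section Bexp

variable {n : ℕ} (p : Fin n → ℝ)

lemma bexp_sum {ι : Type*} (s : Finset ι) (f : ι → (Fin n → Bool) → ℝ) :
    bexp p (fun z => ∑ i ∈ s, f i z) = ∑ i ∈ s, bexp p (f i) := by
  simp only [bexp, Finset.mul_sum]
  exact Finset.sum_comm

lemma bexp_const_mul (c : ℝ) (f : (Fin n → Bool) → ℝ) :
    bexp p (fun z => c * f z) = c * bexp p f := by
  simp only [bexp, Finset.mul_sum]
  exact Finset.sum_congr rfl fun _ _ => mul_left_comm _ _ _

lemma bexp_prod (T : Finset (Fin n)) (f : Fin n → Bool → ℝ) :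
    bexp p (fun z => ∏ j ∈ T, f j (z j))
      = ∏ j ∈ T, (p j * f j true + (1 - p j) * f j false) := by
  classical
  have hextend : ∀ z : Fin n → Bool,
      (∏ j, if z j then p j else 1 - p j) * ∏ j ∈ T, f j (z j)
        = ∏ j, (if z j then p j else 1 - p j) * (if j ∈ T then f j (z j) else 1) := by
    intro z
    rw [Finset.prod_mul_distrib, Finset.prod_ite_mem, Finset.univ_inter]
  simp only [bexp, hextend]
  rw [← Fintype.prod_sum fun j b => (if b then p j else 1 - p j) * (if j ∈ T then f j b else 1)]
  conv_rhs => rw [← Finset.univ_inter T, ← Finset.prod_ite_mem]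
  refine Finset.prod_congr rfl fun j _ => ?_
  split_ifs <;> simp [*]

end Bexp

lemma prod_mul_prod_eq_prod_union {ι M : Type*} [DecidableEq ι] [CommMonoid M]
    (s t : Finset ι) (f g : ι → M) :
    (∏ i ∈ s, f i) * ∏ i ∈ t, g i
      = ∏ i ∈ s ∪ t, (if i ∈ s then f i else 1) * (if i ∈ t then g i else 1) := by
  rw [Finset.prod_mul_distrib, Finset.prod_ite_mem, Finset.prod_ite_mem,
    Finset.union_inter_cancel_left, Finset.union_inter_cancel_right]

lemma bexp_normalized_mul_zval {n : ℕ} (p : Fin n → ℝ) (hp0 : ∀ j, p j ≠ 0)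
    (hp1 : ∀ j, p j ≠ 1) (S S' : Finset (Fin n)) :
    bexp p (fun z =>
      (∏ j ∈ S, ((zval (z j) - p j) / (p j * (1 - p j)))) * ∏ j ∈ S', zval (z j))
      = if S ⊆ S' then ∏ j ∈ S' \ S, p j else 0 := by
  classical
  simp only [prod_mul_prod_eq_prod_union]
  rw [bexp_prod p (S ∪ S') fun j b =>
    (if j ∈ S then (zval b - p j) / (p j * (1 - p j)) else 1) * (if j ∈ S' then zval b else 1)]
  have hfactor : ∀ j,
      p j * ((if j ∈ S then (zval true - p j) / (p j * (1 - p j)) else 1) *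
          (if j ∈ S' then zval true else 1)) +
        (1 - p j) * ((if j ∈ S then (zval false - p j) / (p j * (1 - p j)) else 1) *
          (if j ∈ S' then zval false else 1))
      = if j ∈ S then (if j ∈ S' then 1 else 0) else (if j ∈ S' then p j else 1) := by
    intro j
    have hp0 := hp0 j
    have hp1 : 1 - p j ≠ 0 := sub_ne_zero.mpr (hp1 j).symm
    by_cases hjS : j ∈ S <;> by_cases hjS' : j ∈ S' <;>
      simp only [hjS, hjS', if_true, if_false, zval, Bool.false_eq_true] <;>
      field_simp <;> ring
  simp only [hfactor]
  split_ifs with hsub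
  · rw [Finset.union_eq_right.mpr hsub, ← Finset.prod_sdiff hsub,
      Finset.prod_eq_one (s := S) fun j hj => by simp [hj, hsub hj], mul_one]
    refine Finset.prod_congr rfl fun j hj => ?_
    obtain ⟨hjS', hjS⟩ := Finset.mem_sdiff.mp hj
    simp [hjS, hjS']
  · obtain ⟨j, hjS, hjS'⟩ := Finset.not_subset.mp hsub
    exact Finset.prod_eq_zero (Finset.mem_union_left _ hjS) (by simp [hjS, hjS'])

lemma gcoef_eq_prod_sub_prod {n : ℕ} (p : Fin n → ℝ) (S : Finset (Fin n)) :
    gcoef p S = (∏ s ∈ S, (1 - p s)) - ∏ s ∈ S, (-p s) := by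
  unfold gcoef
  split_ifs with h
  · rfl
  · simp [Finset.not_nonempty_iff_eq_empty.mp h]

lemma sum_powerset_gcoef_mul_prod_sdiff {n : ℕ} (p : Fin n → ℝ) (T : Finset (Fin n)) :
    ∑ S ∈ T.powerset, gcoef p S * ∏ j ∈ T \ S, p j = if T.Nonempty then 1 else 0 := by
  simp only [gcoef_eq_prod_sub_prod, sub_mul, Finset.sum_sub_distrib, ← Finset.prod_add,
    sub_add_cancel, neg_add_cancel, Finset.prod_const_one]
  split_ifs with h
  · obtain ⟨j, hj⟩ := h
    rw [Finset.prod_eq_zero hj rfl, sub_zero]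
  · simp [Finset.not_nonempty_iff_eq_empty.mp h]

theorem stmt3_general {n : ℕ} (p : Fin n → ℝ) (hp : ∀ j, 0 < p j ∧ p j < 1)
    (N : Finset (Fin n)) (β : ℕ)
    (S' : Finset (Fin n)) (hS' : S' ⊆ N) (hcard : S'.card ≤ β) :
    bexp p (fun z =>
      (∑ S ∈ N.powerset.filter (fun S => S.card ≤ β),
        gcoef p S * ∏ j ∈ S, ((zval (z j) - p j) / (p j * (1 - p j)))) *
      ∏ j ∈ S', zval (z j))
    = if S'.Nonempty then 1 else 0 := by
  classical
  have hsubsets : (N.powerset.filter fun S => S.card ≤ β).filter (· ⊆ S') = S'.powerset := by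
    ext S
    simp only [Finset.mem_filter, Finset.mem_powerset]
    exact ⟨And.right, fun h => ⟨⟨h.trans hS', (Finset.card_le_card h).trans hcard⟩, h⟩⟩
  simp only [Finset.sum_mul, mul_assoc]
  rw [bexp_sum]
  simp only [bexp_const_mul, mul_ite, mul_zero,
    bexp_normalized_mul_zval p (fun j => (hp j).1.ne') (fun j => (hp j).2.ne)]
  rw [← Finset.sum_filter, hsubsets, sum_powerset_gcoef_mul_prod_sdiff]

theorem stmt3 {n : ℕ} (p : Fin n → ℝ) (hp : ∀ j, 0 < p j ∧ p j < 1)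
    (N : Finset (Fin n)) (β : ℕ) (hβ : 1 ≤ β)
    (S' : Finset (Fin n)) (hS' : S' ⊆ N) (hcard : S'.card ≤ β) :
    bexp p (fun z =>
      (∑ S ∈ N.powerset.filter (fun S => S.card ≤ β),
        gcoef p S * ∏ j ∈ S, ((zval (z j) - p j) / (p j * (1 - p j)))) *
      ∏ j ∈ S', zval (z j))
    = if S'.Nonempty then 1 else 0 :=
  stmt3_general p hp N β S' hS' hcard
end

section
/- Fix a finite set N with treatment probabilities p_j ∈ (0,1) for j ∈ N, an integer β ≥ 0, and let S collect all subsets of N of size at most β. Define the matrix M indexed by pairs (S,T) ∈ S × S with entries M_{S,T} = ∏_{j∈S∪T} p_j. Then M is invertible, with inverse A given by A_{S,T} = ∏_{j∈S} (−1/p_j) · ∏_{k∈T} (−1/p_k) · ∑_{U∈S, (S∪T)⊆U} ∏_{ℓ∈U} p_ℓ/(1−p_ℓ). -/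
/-!
Let `Z` be the zeta matrix of inclusion on the family of subsets of `N` of size at most `β`, and
`L = diag(∏_S p) Z`. Since `∏_{S ∪ T} p = ∏_S p ∏_T p ∏_{S ∩ T} (1 + (1 - p) / p)` and the last
product expands as `∑_{U ⊆ S ∩ T} ∏_U (1 - p) / p`, we get `M = L R Lᵀ` with
`R = diag(∏_U (1 - p) / p)`. The family is closed under taking subsets, so Möbius inversion on the
Boolean lattice still works inside it: `G = ((-1)^|U| [T ⊆ U] ∏_T (-1 / p))_{U,T}` satisfies
`G L = 1`, and `A = Gᵀ R⁻¹ G`. Hence `M A = L R (G L)ᵀ R⁻¹ G = L G = 1`.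
-/

open Finset Matrix

theorem Finset.sum_Icc_neg_one_pow_card {α R : Type*} [DecidableEq α] [CommRing R]
    (s t : Finset α) :
    ∑ u ∈ Icc s t, (-1 : R) ^ #u = if s = t then (-1) ^ #s else 0 := by
  by_cases hst : s ⊆ t
  · have hdisj : ∀ u ∈ (t \ s).powerset, Disjoint s u := fun u hu =>
      disjoint_sdiff.mono_right (mem_powerset.1 hu)
    rw [Icc_eq_image_powerset hst, sum_image fun u hu v hv huv => by
        rw [← union_sdiff_cancel_left (hdisj u hu), huv, union_sdiff_cancel_left (hdisj v hv)],
      sum_congr rfl fun u hu => by rw [card_union_of_disjoint (hdisj u hu), pow_add],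
      ← mul_sum]
    have hcancel := congrArg (Int.cast : ℤ → R) (sum_powerset_neg_one_pow_card (x := t \ s))
    push_cast at hcancel
    rw [hcancel]
    by_cases hts : t ⊆ s
    · simp [subset_antisymm hst hts]
    · simp [sdiff_eq_empty_iff_subset, hts, show s ≠ t from fun h => hts h.ge]
  · rw [Icc_eq_empty hst, sum_empty, if_neg fun h => hst h.le]

theorem Matrix.mul_diagonal_mul_transpose_mul_eq_one {n R : Type*} [Fintype n] [DecidableEq n]
    [CommRing R] {L G : Matrix n n R} {d e : n → R} (hGL : G * L = 1) (hde : ∀ i, d i * e i = 1) :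
    (L * diagonal d * Lᵀ) * (Gᵀ * diagonal e * G) = 1 := by
  have hLG : L * G = 1 := mul_eq_one_comm.mp hGL
  have hde' : diagonal d * diagonal e = 1 := by
    rw [diagonal_mul_diagonal, ← diagonal_one]
    exact congrArg diagonal (funext hde)
  calc (L * diagonal d * Lᵀ) * (Gᵀ * diagonal e * G)
      = L * diagonal d * (G * L)ᵀ * diagonal e * G := by
        simp only [transpose_mul, Matrix.mul_assoc]
    _ = 1 := by
        rw [hGL, transpose_one, Matrix.mul_one, Matrix.mul_assoc L, hde', Matrix.mul_one, hLG]

abbrev SmallSets {ι : Type*} (N : Finset ι) (β : ℕ) := {S : Finset ι // S ⊆ N ∧ #S ≤ β}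

namespace SmallSets

variable {ι : Type*} [DecidableEq ι] {N : Finset ι} {β : ℕ}

section Sums

variable [Fintype ι] {R : Type*} [AddCommMonoid R]

theorem sum_eq_sum_filter (g : Finset ι → R) :
    ∑ U : SmallSets N β, g U.1 = ∑ U ∈ N.powerset with #U ≤ β, g U :=
  (sum_subtype _ (by simp) g).symm

theorem sum_ite_subset (X : SmallSets N β) (f : Finset ι → R) :
    ∑ U : SmallSets N β, (if U.1 ⊆ X.1 then f U.1 else 0) = ∑ U ∈ X.1.powerset, f U := by
  rw [sum_eq_sum_filter (fun U => if U ⊆ X.1 then f U else 0), ← sum_filter, filter_filter]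
  congr 1
  ext U
  simp only [mem_filter, mem_powerset]
  exact ⟨fun h => h.2.2, fun h => ⟨h.trans X.2.1, (card_le_card h).trans X.2.2, h⟩⟩

end Sums

variable {K : Type*} [Field K]

variable (N β) in
def scaledZeta (p : ι → K) : Matrix (SmallSets N β) (SmallSets N β) K :=
  of fun S U => if U.1 ⊆ S.1 then ∏ j ∈ S.1, p j else 0

variable (N β) in
def scaledMobius (p : ι → K) : Matrix (SmallSets N β) (SmallSets N β) K :=
  of fun U T => if T.1 ⊆ U.1 then (-1) ^ #U.1 * ∏ j ∈ T.1, (-1 / p j) else 0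

variable [Fintype ι]

theorem scaledMobius_mul_scaledZeta {p : ι → K} (hp : ∀ j ∈ N, p j ≠ 0) :
    scaledMobius N β p * scaledZeta N β p = 1 := by
  ext S T
  have hsign : ∀ U : Finset ι, U ⊆ N → (∏ j ∈ U, (-1 / p j)) * ∏ j ∈ U, p j = (-1) ^ #U := by
    intro U hU
    rw [← prod_mul_distrib, ← prod_const]
    exact prod_congr rfl fun j hj => div_mul_cancel₀ _ (hp j (hU hj))
  calc (scaledMobius N β p * scaledZeta N β p) S T
      = ∑ U : SmallSets N β, if U.1 ⊆ S.1 then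
          (if T.1 ⊆ U.1 then (-1) ^ #S.1 * (-1 : K) ^ #U.1 else 0) else 0 := by
        rw [mul_apply]
        refine sum_congr rfl fun U _ => ?_
        simp only [scaledMobius, scaledZeta, of_apply]
        split_ifs
        · rw [mul_assoc, hsign U.1 U.2.1]
        all_goals simp only [mul_zero, zero_mul]
    _ = (-1) ^ #S.1 * ∑ U ∈ Icc T.1 S.1, (-1) ^ #U := by
        rw [sum_ite_subset S (fun U => if T.1 ⊆ U then (-1) ^ #S.1 * (-1 : K) ^ #U else 0),
          ← sum_filter, ← Icc_eq_filter_powerset, mul_sum]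
    _ = (1 : Matrix (SmallSets N β) (SmallSets N β) K) S T := by
        rw [sum_Icc_neg_one_pow_card, one_apply]
        by_cases h : S = T
        · subst h
          rw [if_pos rfl, if_pos rfl, ← pow_add, Even.neg_one_pow ⟨_, rfl⟩]
        · rw [if_neg fun h' => h (Subtype.ext h'.symm), if_neg h, mul_zero]

theorem scaledZeta_mul_diagonal_mul_transpose_apply {p : ι → K} (hp : ∀ j ∈ N, p j ≠ 0)
    (S T : SmallSets N β) :
    (scaledZeta N β p * diagonal (fun U : SmallSets N β => ∏ j ∈ U.1, (1 - p j) / p j) *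
      (scaledZeta N β p)ᵀ) S T = ∏ j ∈ S.1 ∪ T.1, p j := by
  let X : SmallSets N β := ⟨S.1 ∩ T.1, inter_subset_left.trans S.2.1,
    (card_le_card inter_subset_left).trans S.2.2⟩
  have hX : ∏ j ∈ X.1, (1 + (1 - p j) / p j) = (∏ j ∈ X.1, p j)⁻¹ := by
    rw [← prod_inv_distrib]
    refine prod_congr rfl fun j hj => ?_
    have hpj := hp j (X.2.1 hj)
    field_simp
    ring
  calc (scaledZeta N β p * diagonal (fun U : SmallSets N β => ∏ j ∈ U.1, (1 - p j) / p j) *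
        (scaledZeta N β p)ᵀ) S T
      = ∑ U : SmallSets N β, if U.1 ⊆ X.1 then
          (∏ j ∈ S.1, p j) * (∏ j ∈ T.1, p j) * ∏ j ∈ U.1, (1 - p j) / p j else 0 := by
        rw [mul_apply]
        refine sum_congr rfl fun U _ => ?_
        simp only [mul_diagonal, transpose_apply, scaledZeta, of_apply, X, subset_inter_iff]
        rw [ite_zero_mul, ite_zero_mul_ite_zero]
        split_ifs <;> ring
    _ = (∏ j ∈ S.1, p j) * (∏ j ∈ T.1, p j) * ∏ j ∈ X.1, (1 + (1 - p j) / p j) := by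
        rw [sum_ite_subset X fun U => (∏ j ∈ S.1, p j) * (∏ j ∈ T.1, p j) *
          ∏ j ∈ U, (1 - p j) / p j, ← mul_sum, prod_one_add]
    _ = ∏ j ∈ S.1 ∪ T.1, p j := by
        rw [hX, ← prod_union_inter, mul_inv_cancel_right₀ (prod_ne_zero_iff.2 fun j hj =>
          hp j (X.2.1 hj))]

theorem transpose_scaledMobius_mul_diagonal_mul_apply (p : ι → K) (w : Finset ι → K)
    (S T : SmallSets N β) :
    ((scaledMobius N β p)ᵀ * diagonal (fun U : SmallSets N β => w U.1) * scaledMobius N β p) S T =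
      (∏ j ∈ S.1, (-1 / p j)) * (∏ k ∈ T.1, (-1 / p k)) *
        ∑ U ∈ N.powerset with #U ≤ β ∧ S.1 ∪ T.1 ⊆ U, w U := by
  rw [mul_apply, ← filter_filter, sum_filter, ← sum_eq_sum_filter, mul_sum]
  refine sum_congr rfl fun U _ => ?_
  simp only [mul_diagonal, transpose_apply, scaledMobius, of_apply, union_subset_iff]
  rw [ite_zero_mul, ite_zero_mul_ite_zero, mul_ite, mul_zero]
  have hsign : (-1 : K) ^ #U.1 * (-1) ^ #U.1 = 1 := by rw [← pow_add, Even.neg_one_pow ⟨_, rfl⟩]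
  split_ifs
  · linear_combination ((∏ j ∈ S.1, (-1 / p j)) * (∏ k ∈ T.1, (-1 / p k)) * w U.1) * hsign
  · rfl

end SmallSets

open SmallSets in
theorem stmt8 {ι : Type*} [Fintype ι] [DecidableEq ι] (N : Finset ι) (p : ι → ℝ)
    (hp : ∀ j ∈ N, 0 < p j ∧ p j < 1) (β : ℕ)
    (M A : Matrix {S : Finset ι // S ⊆ N ∧ S.card ≤ β}
                  {S : Finset ι // S ⊆ N ∧ S.card ≤ β} ℝ)
    (hM : ∀ S T, M S T = ∏ j ∈ S.1 ∪ T.1, p j)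
    (hA : ∀ S T, A S T =
      (∏ j ∈ S.1, (-1 / p j)) * (∏ k ∈ T.1, (-1 / p k)) *
        ∑ U ∈ N.powerset.filter (fun U => U.card ≤ β ∧ S.1 ∪ T.1 ⊆ U),
          ∏ l ∈ U, (p l / (1 - p l))) :
    M * A = 1 ∧ A * M = 1 := by
  have hp0 : ∀ j ∈ N, p j ≠ 0 := fun j hj => (hp j hj).1.ne'
  have hp1 : ∀ j ∈ N, 1 - p j ≠ 0 := fun j hj => (sub_pos.2 (hp j hj).2).ne'
  have hM' : M = scaledZeta N β p *
      diagonal (fun U : SmallSets N β => ∏ j ∈ U.1, (1 - p j) / p j) * (scaledZeta N β p)ᵀ := by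
    ext S T
    rw [hM, scaledZeta_mul_diagonal_mul_transpose_apply hp0]
  have hA' : A = (scaledMobius N β p)ᵀ *
      diagonal (fun U : SmallSets N β => ∏ l ∈ U.1, p l / (1 - p l)) * scaledMobius N β p := by
    ext S T
    rw [hA, transpose_scaledMobius_mul_diagonal_mul_apply p fun U => ∏ l ∈ U, p l / (1 - p l)]
  have hMA : M * A = 1 := by
    rw [hM', hA']
    refine mul_diagonal_mul_transpose_mul_eq_one (scaledMobius_mul_scaledZeta hp0) fun U => ?_
    rw [← prod_mul_distrib]
    refine prod_eq_one fun j hj => ?_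
    have hpj := hp0 j (U.2.1 hj)
    have hpj' := hp1 j (U.2.1 hj)
    field_simp
  exact ⟨hMA, mul_eq_one_comm.mp hMA⟩
end

section
/- With M and A as above (entries M_{S,T} = ∏_{j∈S∪T} p_j, A as given), the diagonal entries of M·A are all 1: for every S with |S| ≤ β, ∑_{T∈S} M_{S,T} A_{T,S} = 1. -/
open Finset

theorem stmt9 {ι : Type*} [DecidableEq ι] (N : Finset ι) (p : ι → ℝ)
    (hp : ∀ j ∈ N, 0 < p j ∧ p j < 1) (β : ℕ)
    (M A : Finset ι → Finset ι → ℝ)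
    (hM : ∀ S T, M S T = ∏ j ∈ S ∪ T, p j)
    (hA : ∀ S T, A S T =
      (∏ j ∈ S, (-1 / p j)) * (∏ k ∈ T, (-1 / p k)) *
        ∑ U ∈ N.powerset.filter (fun U => U.card ≤ β ∧ S ∪ T ⊆ U),
          ∏ l ∈ U, (p l / (1 - p l)))
    (S : Finset ι) (hS : S ⊆ N) (hc : S.card ≤ β) :
    ∑ T ∈ N.powerset.filter (fun T => T.card ≤ β), M S T * A T S = 1 := by
  classical
  have hp0 : ∀ j ∈ N, p j ≠ 0 := fun j hj => (hp j hj).1.ne'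
  have hp1 : ∀ j ∈ N, 1 - p j ≠ 0 := fun j hj => by
    have := (hp j hj).2; intro h; linarith
  set c : ι → ℝ := fun j => if j ∈ S then -1 / p j else -1 with hcdef
  have hSmem : S ∈ N.powerset.filter (fun U => U.card ≤ β ∧ S ⊆ U) := by
    simp [mem_filter, mem_powerset, hS, hc]
  -- Step 1: expand and swap sums
  have step1 : ∑ T ∈ N.powerset.filter (fun T => T.card ≤ β), M S T * A T S
      = ∑ U ∈ N.powerset.filter (fun U => U.card ≤ β ∧ S ⊆ U),
          ∑ T ∈ U.powerset,
            (∏ j ∈ S ∪ T, p j) * ((∏ j ∈ T, (-1 / p j)) * (∏ k ∈ S, (-1 / p k))) *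
              ∏ l ∈ U, (p l / (1 - p l)) := by
    have e1 : ∑ T ∈ N.powerset.filter (fun T => T.card ≤ β), M S T * A T S
        = ∑ T ∈ N.powerset.filter (fun T => T.card ≤ β),
            ∑ U ∈ N.powerset.filter (fun U => U.card ≤ β ∧ T ∪ S ⊆ U),
              (∏ j ∈ S ∪ T, p j) * ((∏ j ∈ T, (-1 / p j)) * (∏ k ∈ S, (-1 / p k))) *
                ∏ l ∈ U, (p l / (1 - p l)) := by
      refine sum_congr rfl fun T hT => ?_
      rw [hM, hA, ← mul_assoc, Finset.mul_sum]
    rw [e1]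
    refine Finset.sum_comm' ?_
    intro T U
    simp only [mem_filter, mem_powerset]
    constructor
    · rintro ⟨⟨hTN, hTb⟩, hUN, hUb, hTSU⟩
      exact ⟨(union_subset_iff.mp hTSU).1, hUN, hUb, (union_subset_iff.mp hTSU).2⟩
    · rintro ⟨hTU, hUN, hUb, hSU⟩
      exact ⟨⟨hTU.trans hUN, (card_le_card hTU).trans hUb⟩, hUN, hUb,
        union_subset hTU hSU⟩
  rw [step1]
  -- Step 2: compute the inner sum for each U
  have inner : ∀ U ∈ N.powerset.filter (fun U => U.card ≤ β ∧ S ⊆ U),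
      (∑ T ∈ U.powerset,
        (∏ j ∈ S ∪ T, p j) * ((∏ j ∈ T, (-1 / p j)) * (∏ k ∈ S, (-1 / p k))) *
          ∏ l ∈ U, (p l / (1 - p l)))
      = ((-1 : ℝ) ^ S.card * ∏ j ∈ U, (c j + 1)) * ∏ l ∈ U, (p l / (1 - p l)) := by
    intro U hU
    simp only [mem_filter, mem_powerset] at hU
    obtain ⟨hUN, hUb, hSU⟩ := hU
    rw [← Finset.sum_mul]
    congr 1
    have key : ∀ T ∈ U.powerset,
        (∏ j ∈ S ∪ T, p j) * ((∏ j ∈ T, (-1 / p j)) * (∏ k ∈ S, (-1 / p k)))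
        = (-1 : ℝ) ^ S.card * ((∏ j ∈ T, c j) * ∏ j ∈ U \ T, (1 : ℝ)) := by
      intro T hT
      rw [mem_powerset] at hT
      have h1 : ∏ j ∈ S ∪ T, p j = (∏ j ∈ S, p j) * ∏ j ∈ T \ S, p j := by
        rw [← union_sdiff_self_eq_union, prod_union disjoint_sdiff]
      have h2 : (∏ j ∈ T, (-1 / p j))
          = (∏ j ∈ T ∩ S, (-1 / p j)) * ∏ j ∈ T \ S, (-1 / p j) :=
        (prod_inter_mul_prod_diff T S _).symm
      have h3 : (∏ j ∈ T, c j)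
          = (∏ j ∈ T ∩ S, (-1 / p j)) * ∏ j ∈ T \ S, (-1 : ℝ) := by
        rw [← prod_inter_mul_prod_diff T S c]
        congr 1
        · exact prod_congr rfl fun j hj => by
            simp [hcdef, (mem_inter.mp hj).2]
        · exact prod_congr rfl fun j hj => by
            simp [hcdef, (mem_sdiff.mp hj).2]
      have h4 : (∏ j ∈ S, p j) * ∏ j ∈ S, (-1 / p j) = (-1 : ℝ) ^ S.card := by
        rw [← prod_mul_distrib]
        rw [show ((-1 : ℝ) ^ S.card) = ∏ _j ∈ S, (-1 : ℝ) by rw [prod_const]]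
        refine prod_congr rfl fun j hj => ?_
        have := hp0 j (hS hj)
        field_simp
      have h5 : (∏ j ∈ T \ S, p j) * ∏ j ∈ T \ S, (-1 / p j)
          = ∏ j ∈ T \ S, (-1 : ℝ) := by
        rw [← prod_mul_distrib]
        refine prod_congr rfl fun j hj => ?_
        have := hp0 j (hUN (hT (mem_sdiff.mp hj).1))
        field_simp
      rw [h1, h2, h3, prod_const_one, mul_one, ← h4, ← h5]
      ring
    rw [Finset.sum_congr rfl key, ← Finset.mul_sum]
    congr 1
    rw [Finset.prod_add c (fun _ => (1 : ℝ)) U]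
  rw [Finset.sum_congr rfl inner]
  -- Step 3: only U = S survives
  rw [Finset.sum_eq_single_of_mem S hSmem]
  · -- value at S is 1
    rw [show ((-1 : ℝ) ^ S.card) = ∏ _j ∈ S, (-1 : ℝ) by rw [prod_const],
      ← prod_mul_distrib, ← prod_mul_distrib]
    refine prod_eq_one fun j hj => ?_
    have h0 := hp0 j (hS hj)
    have h1 := hp1 j (hS hj)
    simp only [hcdef, if_pos hj]
    field_simp
    ring
  · intro U hU hne
    simp only [mem_filter, mem_powerset] at hU
    obtain ⟨hUN, hUb, hSU⟩ := hU
    obtain ⟨j, hjU, hjS⟩ := Finset.exists_of_ssubset (hSU.ssubset_of_ne (Ne.symm hne))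
    have : ∏ j ∈ U, (c j + 1) = 0 := by
      refine prod_eq_zero hjU ?_
      simp [hcdef, hjS]
    rw [this]
    ring
end

section
/- With M and A as above, the off-diagonal entries of M·A vanish: for subsets S', S with |S'|,|S| ≤ β and S' \ S ≠ ∅, we have ∑_{T∈S} M_{S',T} A_{T,S} = 0. -/
open Finset

private lemma aux_alt {α : Type*} [DecidableEq α] {x : Finset α} (h : x.Nonempty) :
    ∑ m ∈ x.powerset, (-1 : ℝ) ^ m.card = 0 := by
  have h1 := Finset.sum_powerset_neg_one_pow_card_of_nonempty h
  have h2 : ((∑ m ∈ x.powerset, (-1 : ℤ) ^ m.card : ℤ) : ℝ)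
      = ∑ m ∈ x.powerset, (-1 : ℝ) ^ m.card := by push_cast; ring
  rw [← h2, h1]; simp

theorem stmt10 {ι : Type*} [DecidableEq ι] (N : Finset ι) (p : ι → ℝ)
    (hp : ∀ j ∈ N, 0 < p j ∧ p j < 1) (β : ℕ)
    (M A : Finset ι → Finset ι → ℝ)
    (hM : ∀ S T, M S T = ∏ j ∈ S ∪ T, p j)
    (hA : ∀ S T, A S T =
      (∏ j ∈ S, (-1 / p j)) * (∏ k ∈ T, (-1 / p k)) *
        ∑ U ∈ N.powerset.filter (fun U => U.card ≤ β ∧ S ∪ T ⊆ U),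
          ∏ l ∈ U, (p l / (1 - p l)))
    (S' S : Finset ι) (hS' : S' ⊆ N) (hc' : S'.card ≤ β)
    (hS : S ⊆ N) (hc : S.card ≤ β) (hne : (S' \ S).Nonempty) :
    ∑ T ∈ N.powerset.filter (fun T => T.card ≤ β), M S' T * A T S = 0 := by
  classical
  have hp0 : ∀ j ∈ N, p j ≠ 0 := fun j hj => ne_of_gt (hp j hj).1
  have hp1 : ∀ j ∈ N, (1 : ℝ) - p j ≠ 0 := fun j hj => ne_of_gt (sub_pos.2 (hp j hj).2)
  -- Step 1: expand the summand into a double sum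
  have step1 : ∑ T ∈ N.powerset.filter (fun T => T.card ≤ β), M S' T * A T S
      = ∑ T ∈ N.powerset.filter (fun T => T.card ≤ β),
          ∑ U ∈ N.powerset.filter (fun U => U.card ≤ β ∧ T ∪ S ⊆ U),
            ((∏ j ∈ S' ∪ T, p j) * (∏ j ∈ T, (-1 / p j)))
              * ((∏ k ∈ S, (-1 / p k)) * ∏ l ∈ U, (p l / (1 - p l))) := by
    refine sum_congr rfl fun T _ => ?_
    rw [hM, hA, Finset.mul_sum, Finset.mul_sum]
    exact sum_congr rfl fun U _ => by ring
  rw [step1]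
  -- Step 2: swap the order of summation
  have step2 : ∑ T ∈ N.powerset.filter (fun T => T.card ≤ β),
          ∑ U ∈ N.powerset.filter (fun U => U.card ≤ β ∧ T ∪ S ⊆ U),
            ((∏ j ∈ S' ∪ T, p j) * (∏ j ∈ T, (-1 / p j)))
              * ((∏ k ∈ S, (-1 / p k)) * ∏ l ∈ U, (p l / (1 - p l)))
      = ∑ U ∈ N.powerset.filter (fun U => U.card ≤ β ∧ S ⊆ U),
          ∑ T ∈ U.powerset,
            ((∏ j ∈ S' ∪ T, p j) * (∏ j ∈ T, (-1 / p j)))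
              * ((∏ k ∈ S, (-1 / p k)) * ∏ l ∈ U, (p l / (1 - p l))) := by
    refine Finset.sum_comm' ?_
    intro T U
    simp only [mem_filter, mem_powerset, union_subset_iff]
    constructor
    · rintro ⟨⟨hTN, hTb⟩, ⟨hUN, hUb, hTU, hSU⟩⟩
      exact ⟨hTU, ⟨hUN, hUb, hSU⟩⟩
    · rintro ⟨hTU, ⟨hUN, hUb, hSU⟩⟩
      exact ⟨⟨hTU.trans hUN, le_trans (card_le_card hTU) hUb⟩, ⟨hUN, hUb, hTU, hSU⟩⟩
  rw [step2]
  -- Step 3: evaluate the inner sum for each U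
  have step3 : ∀ U ∈ N.powerset.filter (fun U => U.card ≤ β ∧ S ⊆ U),
      ∑ T ∈ U.powerset,
          ((∏ j ∈ S' ∪ T, p j) * (∏ j ∈ T, (-1 / p j)))
            * ((∏ k ∈ S, (-1 / p k)) * ∏ l ∈ U, (p l / (1 - p l)))
      = ((∏ j ∈ S', p j) * ∏ k ∈ S, (-1 / p k))
          * (if U ⊆ S' then (-1 : ℝ) ^ U.card else 0) := by
    intro U hU
    simp only [mem_filter, mem_powerset] at hU
    obtain ⟨hUN, _, _⟩ := hU
    -- inner T-sum evaluation
    have key : ∑ T ∈ U.powerset, (∏ j ∈ S' ∪ T, p j) * (∏ j ∈ T, (-1 / p j))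
        = (∏ j ∈ S', p j) * ∏ j ∈ U, ((if j ∈ S' then (-1 / p j) else -1) + 1) := by
      have expand : ∀ T ∈ U.powerset,
          (∏ j ∈ S' ∪ T, p j) * (∏ j ∈ T, (-1 / p j))
            = (∏ j ∈ S', p j) * ∏ j ∈ T, (if j ∈ S' then (-1 / p j) else -1) := by
        intro T hT
        rw [mem_powerset] at hT
        have hTN : T ⊆ N := hT.trans hUN
        have h1 : (∏ j ∈ S' ∪ T, p j) = (∏ j ∈ S', p j) * ∏ j ∈ T \ S', p j := by
          rw [← union_sdiff_self_eq_union, prod_union disjoint_sdiff]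
        have h2 : (∏ j ∈ T \ S', p j) = ∏ j ∈ T, (if j ∈ S' then 1 else p j) := by
          rw [sdiff_eq_filter, prod_filter]
          exact prod_congr rfl fun j _ => by by_cases h : j ∈ S' <;> simp [h]
        rw [h1, h2, mul_assoc, ← prod_mul_distrib]
        congr 1
        refine prod_congr rfl fun j hj => ?_
        have hpj := hp0 j (hTN hj)
        by_cases h : j ∈ S' <;> simp [h] <;> field_simp
      rw [sum_congr rfl expand, ← Finset.mul_sum]
      congr 1
      rw [prod_add]
      refine sum_congr rfl fun T _ => ?_
      simp
    -- factor out the T-independent part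
    have factor : ∑ T ∈ U.powerset,
        ((∏ j ∈ S' ∪ T, p j) * (∏ j ∈ T, (-1 / p j)))
          * ((∏ k ∈ S, (-1 / p k)) * ∏ l ∈ U, (p l / (1 - p l)))
        = (∑ T ∈ U.powerset, (∏ j ∈ S' ∪ T, p j) * (∏ j ∈ T, (-1 / p j)))
          * ((∏ k ∈ S, (-1 / p k)) * ∏ l ∈ U, (p l / (1 - p l))) := by
      rw [Finset.sum_mul]
    rw [factor, key]
    -- combine products over U
    have comb : (∏ j ∈ U, ((if j ∈ S' then (-1 / p j) else -1) + 1))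
        * ∏ l ∈ U, (p l / (1 - p l))
        = ∏ j ∈ U, (if j ∈ S' then (-1 : ℝ) else 0) := by
      rw [← prod_mul_distrib]
      refine prod_congr rfl fun j hj => ?_
      have hpj := hp0 j (hUN hj)
      have hpj1 := hp1 j (hUN hj)
      by_cases h : j ∈ S' <;> simp only [h, if_true, if_false]
      · field_simp
        ring
      · ring
    have final : (∏ j ∈ U, (if j ∈ S' then (-1 : ℝ) else 0))
        = if U ⊆ S' then (-1 : ℝ) ^ U.card else 0 := by
      by_cases h : U ⊆ S'
      · rw [if_pos h]
        rw [prod_congr rfl (fun j hj => if_pos (h hj)), prod_const]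
      · rw [if_neg h]
        obtain ⟨j, hjU, hjS'⟩ := not_subset.1 h
        exact prod_eq_zero hjU (by simp [hjS'])
    calc ((∏ j ∈ S', p j) * ∏ j ∈ U, ((if j ∈ S' then (-1 / p j) else -1) + 1))
          * ((∏ k ∈ S, (-1 / p k)) * ∏ l ∈ U, (p l / (1 - p l)))
        = ((∏ j ∈ S', p j) * ∏ k ∈ S, (-1 / p k))
            * ((∏ j ∈ U, ((if j ∈ S' then (-1 / p j) else -1) + 1))
              * ∏ l ∈ U, (p l / (1 - p l))) := by ring
      _ = _ := by rw [comb, final]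
  rw [sum_congr rfl step3, ← Finset.mul_sum]
  -- Step 4: the remaining alternating sum vanishes
  have step4 : ∑ U ∈ N.powerset.filter (fun U => U.card ≤ β ∧ S ⊆ U),
      (if U ⊆ S' then (-1 : ℝ) ^ U.card else 0) = 0 := by
    rw [← Finset.sum_filter]
    by_cases hss : S ⊆ S'
    · have hbij : ∑ U ∈ ((N.powerset.filter (fun U => U.card ≤ β ∧ S ⊆ U)).filter
            (fun U => U ⊆ S')), (-1 : ℝ) ^ U.card
          = ∑ V ∈ (S' \ S).powerset, (-1 : ℝ) ^ S.card * (-1 : ℝ) ^ V.card := by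
        refine Finset.sum_nbij' (fun U => U \ S) (fun V => S ∪ V) ?_ ?_ ?_ ?_ ?_
        · intro U hU
          simp only [mem_filter, mem_powerset] at hU ⊢
          exact sdiff_subset_sdiff hU.2 (le_refl S)
        · intro V hV
          simp only [mem_filter, mem_powerset] at hV ⊢
          have hVS' : V ⊆ S' := hV.trans sdiff_subset
          have hsub : S ∪ V ⊆ S' := union_subset hss hVS'
          exact ⟨⟨hsub.trans hS', le_trans (card_le_card hsub) hc',
            subset_union_left⟩, hsub⟩
        · intro U hU
          simp only [mem_filter, mem_powerset] at hU
          exact union_sdiff_of_subset hU.1.2.2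
        · intro V hV
          simp only [mem_powerset] at hV
          have hdisj : Disjoint S V := disjoint_sdiff.mono_right hV
          exact union_sdiff_cancel_left hdisj
        · intro U hU
          simp only [mem_filter, mem_powerset] at hU
          have hsub : S ⊆ U := hU.1.2.2
          rw [← pow_add, ← card_union_of_disjoint disjoint_sdiff,
            union_sdiff_of_subset hsub]
      rw [hbij, ← Finset.mul_sum, aux_alt hne, mul_zero]
    · refine Finset.sum_eq_zero fun U hU => ?_
      simp only [mem_filter, mem_powerset] at hU
      exact absurd (hU.1.2.2.trans hU.2) hss
  rw [step4, mul_zero]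
end

section
/- For z ∈ {0,1}^n with each p_j ∈ [p, 1−p], p > 0, and N_i a finite set of size at most d ≥ 2, the SNIPE weight satisfies |w_i(z)| = |∑_{S⊆N_i, |S|≤β} g(S) ∏_{j∈S} (z_j−p_j)/(p_j(1−p_j))| ≤ (d/p)^β, where β ≥ 1. -/
open Finset Real

private lemma natsum_choose (d : ℕ) (hd : 2 ≤ d) :
    ∀ β, 1 ≤ β → ∑ k ∈ Finset.range β, d.choose (k + 1) ≤ d ^ β := by
  intro β hβ
  induction β with
  | zero => omega
  | succ b ih =>
    rcases Nat.eq_or_lt_of_le hβ with h1 | h1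
    · simp [← h1]
    · have hb : 1 ≤ b := by omega
      have ihb := ih hb
      rw [Finset.sum_range_succ]
      have hid : d.choose (b + 1) * (b + 1) = d.choose b * (d - b) :=
        Nat.choose_succ_right_eq d b
      have h2 : 2 * d.choose (b + 1) ≤ d.choose (b + 1) * (b + 1) := by nlinarith
      have h3 : d.choose b * (d - b) ≤ d ^ b * d := by
        exact Nat.mul_le_mul (Nat.choose_le_pow d b) (Nat.sub_le d b)
      have h4 : 2 * d ^ b ≤ d ^ b * d := by nlinarith [Nat.one_le_two_pow (n := b)]
      have h5 : d ^ b * d = d ^ (b + 1) := by ring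
      omega

private lemma prod_add_prod_le {n : ℕ} (p : Fin n → ℝ) (h : ∀ j, 0 ≤ p j ∧ p j ≤ 1)
    (S : Finset (Fin n)) (hS : S.Nonempty) :
    (∏ s ∈ S, (1 - p s)) + ∏ s ∈ S, p s ≤ 1 := by
  induction hS using Finset.Nonempty.cons_induction with
  | singleton a => simp
  | cons a S ha hS ih =>
    rw [Finset.prod_cons, Finset.prod_cons]
    have hA0 : 0 ≤ ∏ s ∈ S, (1 - p s) := Finset.prod_nonneg fun s _ => by linarith [(h s).2]
    have hB0 : 0 ≤ ∏ s ∈ S, p s := Finset.prod_nonneg fun s _ => (h s).1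
    have ha0 := (h a).1
    have ha1 := (h a).2
    nlinarith

theorem stmt12 {n : ℕ} (p : Fin n → ℝ) (q : ℝ) (hq : 0 < q) (hq2 : q ≤ 1 / 2)
    (hp : ∀ j, q ≤ p j ∧ p j ≤ 1 - q)
    (N : Finset (Fin n)) (d β : ℕ) (hN : N.card ≤ d) (hd : 2 ≤ d) (hβ : 1 ≤ β)
    (z : Fin n → Bool) :
    |∑ S ∈ N.powerset.filter (fun S => S.card ≤ β),
        gcoef p S * ∏ j ∈ S, ((zval (z j) - p j) / (p j * (1 - p j)))|
      ≤ ((d : ℝ) / q) ^ β := by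
  set F := N.powerset.filter (fun S => S.card ≤ β) with hF
  have hp01 : ∀ j, 0 ≤ p j ∧ p j ≤ 1 := fun j => ⟨le_of_lt (lt_of_lt_of_le hq (hp j).1),
    by linarith [(hp j).2]⟩
  have hqinv1 : (1 : ℝ) ≤ 1 / q := by
    rw [le_div_iff₀ hq]; linarith
  -- bound on each nonempty term
  have hterm : ∀ S ∈ F.erase ∅,
      |gcoef p S * ∏ j ∈ S, ((zval (z j) - p j) / (p j * (1 - p j)))| ≤ (1 / q) ^ β := by
    intro S hS
    have hne : S ≠ ∅ := Finset.ne_of_mem_erase hS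
    have hSne : S.Nonempty := Finset.nonempty_iff_ne_empty.mpr hne
    have hSF : S ∈ F := Finset.mem_of_mem_erase hS
    have hcard : S.card ≤ β := (Finset.mem_filter.mp hSF).2
    have hg : |gcoef p S| ≤ 1 := by
      rw [gcoef, if_pos hSne]
      have hC : |∏ s ∈ S, (-p s)| = ∏ s ∈ S, p s := by
        rw [Finset.abs_prod]
        exact Finset.prod_congr rfl fun s _ => by rw [abs_neg, abs_of_nonneg (hp01 s).1]
      have hA0 : 0 ≤ ∏ s ∈ S, (1 - p s) :=
        Finset.prod_nonneg fun s _ => by linarith [(hp01 s).2]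
      have hsum := prod_add_prod_le p hp01 S hSne
      calc |(∏ s ∈ S, (1 - p s)) - ∏ s ∈ S, (-p s)|
          ≤ |∏ s ∈ S, (1 - p s)| + |∏ s ∈ S, (-p s)| := abs_sub _ _
        _ = (∏ s ∈ S, (1 - p s)) + ∏ s ∈ S, p s := by rw [abs_of_nonneg hA0, hC]
        _ ≤ 1 := hsum
    have hprod : |∏ j ∈ S, ((zval (z j) - p j) / (p j * (1 - p j)))| ≤ (1 / q) ^ S.card := by
      rw [Finset.abs_prod, ← Finset.prod_const]
      refine Finset.prod_le_prod (fun j _ => abs_nonneg _) fun j _ => ?_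
      have hpj := hp j
      have hpj0 : 0 < p j := lt_of_lt_of_le hq hpj.1
      have hpj1 : 0 < 1 - p j := lt_of_lt_of_le hq (by linarith [hpj.2])
      have hden : 0 < p j * (1 - p j) := mul_pos hpj0 hpj1
      rw [abs_div, abs_of_pos hden]
      cases hzj : z j with
      | true =>
        have : zval true = 1 := rfl
        rw [this, abs_of_pos (by linarith : (0:ℝ) < 1 - p j)]
        rw [div_le_div_iff₀ hden hq]
        have : (1 - p j) * q ≤ p j * (1 - p j) := by nlinarith
        linarith
      | false =>
        have : zval false = 0 := rfl
        rw [this]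
        rw [abs_of_nonpos (by linarith : (0:ℝ) - p j ≤ 0)]
        rw [div_le_div_iff₀ hden hq]
        nlinarith
    calc |gcoef p S * ∏ j ∈ S, ((zval (z j) - p j) / (p j * (1 - p j)))|
        = |gcoef p S| * |∏ j ∈ S, ((zval (z j) - p j) / (p j * (1 - p j)))| := abs_mul _ _
      _ ≤ 1 * (1 / q) ^ S.card := by
          exact mul_le_mul hg hprod (abs_nonneg _) (by norm_num)
      _ = (1 / q) ^ S.card := one_mul _
      _ ≤ (1 / q) ^ β := pow_le_pow_right₀ hqinv1 hcard
  -- counting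
  have hcount : (F.erase ∅).card ≤ d ^ β := by
    have hsub : F.erase ∅ ⊆ (Finset.range β).biUnion (fun k => N.powersetCard (k + 1)) := by
      intro S hS
      have hne : S ≠ ∅ := Finset.ne_of_mem_erase hS
      have hSF : S ∈ F := Finset.mem_of_mem_erase hS
      have hmem := Finset.mem_filter.mp hSF
      have hsub' : S ⊆ N := Finset.mem_powerset.mp hmem.1
      have hcard : S.card ≤ β := hmem.2
      have hpos : 1 ≤ S.card := Finset.card_pos.mpr (Finset.nonempty_iff_ne_empty.mpr hne)
      rw [Finset.mem_biUnion]
      exact ⟨S.card - 1, Finset.mem_range.mpr (by omega),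
        Finset.mem_powersetCard.mpr ⟨hsub', by omega⟩⟩
    calc (F.erase ∅).card ≤ ((Finset.range β).biUnion (fun k => N.powersetCard (k + 1))).card :=
          Finset.card_le_card hsub
      _ ≤ ∑ k ∈ Finset.range β, (N.powersetCard (k + 1)).card := Finset.card_biUnion_le
      _ = ∑ k ∈ Finset.range β, N.card.choose (k + 1) := by
          exact Finset.sum_congr rfl fun k _ => Finset.card_powersetCard _ _
      _ ≤ ∑ k ∈ Finset.range β, d.choose (k + 1) :=
          Finset.sum_le_sum fun k _ => Nat.choose_le_choose _ hN
      _ ≤ d ^ β := natsum_choose d hd β hβ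
  have hzero : gcoef p (∅ : Finset (Fin n)) * ∏ j ∈ (∅ : Finset (Fin n)),
      ((zval (z j) - p j) / (p j * (1 - p j))) = 0 := by simp [gcoef]
  have hmemF : (∅ : Finset (Fin n)) ∈ F := by
    rw [hF, Finset.mem_filter]; simp
  calc |∑ S ∈ F, gcoef p S * ∏ j ∈ S, ((zval (z j) - p j) / (p j * (1 - p j)))|
      ≤ ∑ S ∈ F, |gcoef p S * ∏ j ∈ S, ((zval (z j) - p j) / (p j * (1 - p j)))| :=
        Finset.abs_sum_le_sum_abs _ _
    _ = ∑ S ∈ F.erase ∅, |gcoef p S * ∏ j ∈ S, ((zval (z j) - p j) / (p j * (1 - p j)))| := by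
        rw [Finset.sum_erase _ (by rw [hzero, abs_zero])]
    _ ≤ (F.erase ∅).card • ((1 / q) ^ β) := Finset.sum_le_card_nsmul _ _ _ hterm
    _ = ((F.erase ∅).card : ℝ) * (1 / q) ^ β := nsmul_eq_mul _ _
    _ ≤ (d ^ β : ℝ) * (1 / q) ^ β := by
        apply mul_le_mul_of_nonneg_right _ (by positivity)
        exact_mod_cast hcount
    _ = ((d : ℝ) / q) ^ β := by
        rw [div_pow, div_pow, one_pow]; ring
end

section
/- Let z_j be independent Bernoulli(p_j) with p_j ∈ (0,1). For a nonempty finite set S, E[ (∑_{S'⊆S} g(S') ∏_{j∈S'} (z_j−p_j)/(p_j(1−p_j)))² ] over all subsets S' of S equals ∑_{S'⊆S} ( ∏_{j∈S'} (1−p_j)/p_j + ∏_{j∈S'} p_j/(1−p_j) − 2(−1)^{|S'|} ), where g(S') = ∏_{j∈S'}(1−p_j) − ∏_{j∈S'}(−p_j) and g(∅)=0. -/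
open Finset Real

/-!
The functions `χ_A(z) = ∏_{j ∈ A} (z_j - p_j) / (p_j (1 - p_j))` are orthogonal under the product
Bernoulli measure, with `E[χ_A²] = ∏_{j ∈ A} 1 / (p_j (1 - p_j))`: the expectation of a product
of functions of independent coordinates factors, and each centred coordinate has mean zero.
So the second moment of `∑_A g(A) χ_A` is `∑_A g(A)² E[χ_A²]`, and expanding
`g(A)² = (∏ (1 - p_j) - ∏ (-p_j))²` gives the three terms of each summand.
-/

namespace Bernoulli

variable {n : ℕ} (p : Fin n → ℝ)

noncomputable def biasedChar (j : Fin n) (b : Bool) : ℝ :=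
  (zval b - p j) / (p j * (1 - p j))

noncomputable def biasedChi (A : Finset (Fin n)) (z : Fin n → Bool) : ℝ :=
  ∏ j ∈ A, biasedChar p j (z j)

lemma bexp_sum {ι : Type*} (s : Finset ι) (F : ι → (Fin n → Bool) → ℝ) :
    bexp p (fun z => ∑ a ∈ s, F a z) = ∑ a ∈ s, bexp p (F a) := by
  simp only [bexp, Finset.mul_sum]
  exact Finset.sum_comm

lemma bexp_const_mul (c : ℝ) (f : (Fin n → Bool) → ℝ) :
    bexp p (fun z => c * f z) = c * bexp p f := by
  simp only [bexp, Finset.mul_sum, mul_left_comm]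

lemma bexp_prod (w : Fin n → Bool → ℝ) :
    bexp p (fun z => ∏ j, w j (z j)) = ∏ j, (p j * w j true + (1 - p j) * w j false) := by
  simp only [bexp, ← Finset.prod_mul_distrib]
  rw [← Fintype.piFinset_univ,
    ← Finset.prod_univ_sum (fun _ => univ) fun j b => (if b then p j else 1 - p j) * w j b]
  simp

lemma mean_biasedChar (j : Fin n) :
    p j * biasedChar p j true + (1 - p j) * biasedChar p j false = 0 := by
  simp only [biasedChar, zval, if_true, Bool.false_eq_true, if_false]
  ring

-- At `p j ∈ {0, 1}` both sides vanish, since `x / 0 = 0`.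
lemma mean_biasedChar_sq (j : Fin n) :
    p j * biasedChar p j true ^ 2 + (1 - p j) * biasedChar p j false ^ 2
      = 1 / (p j * (1 - p j)) := by
  rcases eq_or_ne (p j * (1 - p j)) 0 with h | h
  · simp only [biasedChar, h, div_zero]
    ring
  · obtain ⟨h0, h1⟩ := mul_ne_zero_iff.1 h
    simp only [biasedChar, zval, if_true, Bool.false_eq_true, if_false]
    field_simp
    ring

lemma mean_biasedChar_ite_mul_ite (j : Fin n) (a b : Prop) [Decidable a] [Decidable b] :
    p j * ((if a then biasedChar p j true else 1) * (if b then biasedChar p j true else 1))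
      + (1 - p j) * ((if a then biasedChar p j false else 1) *
          (if b then biasedChar p j false else 1))
      = if (a ↔ b) then (if a then 1 / (p j * (1 - p j)) else 1) else 0 := by
  by_cases ha : a <;> by_cases hb : b <;>
    simp only [ha, hb, if_true, if_false, iff_self, iff_false, false_iff, not_true_eq_false,
      mul_one, one_mul]
  · rw [← mean_biasedChar_sq]; ring
  · exact mean_biasedChar p j
  · exact mean_biasedChar p j
  · ring

lemma bexp_biasedChi_mul (A B : Finset (Fin n)) :
    bexp p (fun z => biasedChi p A z * biasedChi p B z)
      = if A = B then ∏ j ∈ A, 1 / (p j * (1 - p j)) else 0 := by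
  have split (C : Finset (Fin n)) (z : Fin n → Bool) :
      biasedChi p C z = ∏ j, if j ∈ C then biasedChar p j (z j) else 1 := by
    rw [biasedChi, Finset.prod_ite_mem, Finset.univ_inter]
  simp only [split, ← Finset.prod_mul_distrib]
  rw [bexp_prod p fun j b =>
    (if j ∈ A then biasedChar p j b else 1) * (if j ∈ B then biasedChar p j b else 1)]
  simp only [mean_biasedChar_ite_mul_ite]
  split_ifs with hAB
  · subst hAB
    simp only [iff_self, if_true, Finset.prod_ite_mem, Finset.univ_inter]
  · obtain ⟨j, hj⟩ : ∃ j, ¬(j ∈ A ↔ j ∈ B) := by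
      by_contra! h
      exact hAB (Finset.ext h)
    exact Finset.prod_eq_zero (Finset.mem_univ j) (if_neg hj)

lemma bexp_sum_biasedChi_sq (s : Finset (Finset (Fin n))) (c : Finset (Fin n) → ℝ) :
    bexp p (fun z => (∑ A ∈ s, c A * biasedChi p A z) ^ 2)
      = ∑ A ∈ s, c A ^ 2 * ∏ j ∈ A, 1 / (p j * (1 - p j)) := by
  have expand (z : Fin n → Bool) : (∑ A ∈ s, c A * biasedChi p A z) ^ 2
      = ∑ A ∈ s, ∑ B ∈ s, c A * c B * (biasedChi p A z * biasedChi p B z) := by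
    rw [sq, Finset.sum_mul_sum]
    exact Finset.sum_congr rfl fun A _ => Finset.sum_congr rfl fun B _ => by ring
  simp only [expand, bexp_sum, bexp_const_mul, bexp_biasedChi_mul, mul_ite, mul_zero]
  refine Finset.sum_congr rfl fun A hA => ?_
  rw [Finset.sum_ite_eq s A, if_pos hA, sq]

end Bernoulli

lemma gcoef_sq_mul_prod {n : ℕ} (p : Fin n → ℝ) (A : Finset (Fin n))
    (hp : ∀ j ∈ A, p j ≠ 0 ∧ 1 - p j ≠ 0) :
    gcoef p A ^ 2 * ∏ j ∈ A, 1 / (p j * (1 - p j))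
      = (∏ j ∈ A, (1 - p j) / p j) + (∏ j ∈ A, p j / (1 - p j)) - 2 * (-1 : ℝ) ^ A.card := by
  rcases A.eq_empty_or_nonempty with rfl | hA
  · norm_num [gcoef]
  have prod_three (f g h : Fin n → ℝ)
      (hfg : ∀ j ∈ A, f j * g j * (1 / (p j * (1 - p j))) = h j) :
      (∏ j ∈ A, f j) * (∏ j ∈ A, g j) * ∏ j ∈ A, 1 / (p j * (1 - p j)) = ∏ j ∈ A, h j := by
    rw [← Finset.prod_mul_distrib, ← Finset.prod_mul_distrib]
    exact Finset.prod_congr rfl hfg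
  have e1 := prod_three (1 - p ·) (1 - p ·) (fun j => (1 - p j) / p j)
    fun j hj => by obtain ⟨h0, h1⟩ := hp j hj; field_simp
  have e2 := prod_three (-p ·) (-p ·) (fun j => p j / (1 - p j))
    fun j hj => by obtain ⟨h0, h1⟩ := hp j hj; field_simp
  have e3 := prod_three (1 - p ·) (-p ·) (fun _ => -1)
    fun j hj => by obtain ⟨h0, h1⟩ := hp j hj; field_simp
  rw [Finset.prod_const] at e3
  rw [gcoef, if_pos hA]
  linear_combination e1 + e2 - 2 * e3

theorem stmt15_general {n : ℕ} (p : Fin n → ℝ) (hp : ∀ j, 0 < p j ∧ p j < 1)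
    (S : Finset (Fin n)) :
    bexp p (fun z =>
      (∑ S' ∈ S.powerset,
        gcoef p S' * ∏ j ∈ S', ((zval (z j) - p j) / (p j * (1 - p j)))) ^ 2)
    = ∑ S' ∈ S.powerset,
        ((∏ j ∈ S', ((1 - p j) / p j)) + (∏ j ∈ S', (p j / (1 - p j)))
          - 2 * (-1 : ℝ) ^ S'.card) := by
  have hp' (j : Fin n) : p j ≠ 0 ∧ 1 - p j ≠ 0 :=
    ⟨(hp j).1.ne', (sub_pos.2 (hp j).2).ne'⟩
  refine (Bernoulli.bexp_sum_biasedChi_sq p S.powerset (gcoef p)).trans ?_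
  exact Finset.sum_congr rfl fun A _ => gcoef_sq_mul_prod p A fun j _ => hp' j

theorem stmt15 {n : ℕ} (p : Fin n → ℝ) (hp : ∀ j, 0 < p j ∧ p j < 1)
    (S : Finset (Fin n)) (hS : S.Nonempty) :
    bexp p (fun z =>
      (∑ S' ∈ S.powerset,
        gcoef p S' * ∏ j ∈ S', ((zval (z j) - p j) / (p j * (1 - p j)))) ^ 2)
    = ∑ S' ∈ S.powerset,
        ((∏ j ∈ S', ((1 - p j) / p j)) + (∏ j ∈ S', (p j / (1 - p j)))
          - 2 * (-1 : ℝ) ^ S'.card) :=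
  stmt15_general p hp S
end

section
/- If P_0 and P_1 are two probability distributions on the same space, then the total variation distance satisfies ‖P_0 − P_1‖_TV ≤ sqrt(1 − exp(−D_KL(P_0 ‖ P_1))) (Bretagnolle–Huber inequality). -/
/-!
Write `g = dμ/dν` and `δ = ∫ (1 - g)⁺ dν`. Since `g - 1` has `ν`-mean zero, its integral over any
set is at most `δ` in absolute value, so `|μ s - ν s| ≤ δ`. Cauchy–Schwarz applied to
`√g = √(min g 1) · √(max g 1)` bounds the Bhattacharyya coefficient `∫ √g dν` by
`√((1 - δ)(1 + δ))`, while Jensen's inequality for `exp` under `μ` gives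
`exp (-KL / 2) ≤ ∫ exp (-llr / 2) dμ = ∫ √g dν`. Squaring, `exp (-KL) ≤ 1 - δ ^ 2`.
-/

open MeasureTheory Real

lemma Real.mul_exp_neg_log_div_two {t : ℝ} (ht : 0 ≤ t) : t * exp (-log t / 2) = √t := by
  rcases ht.eq_or_lt with rfl | ht
  · simp
  rw [sqrt_eq_rpow, rpow_def_of_pos ht]
  nth_rewrite 1 [← exp_log ht]
  rw [← exp_add]
  ring_nf

namespace MeasureTheory

variable {α : Type*} [MeasurableSpace α] {μ ν : Measure α}

lemma Integrable.memLp_two_sqrt {f : α → ℝ} (hf : Integrable f μ) (hf₀ : 0 ≤ f) :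
    MemLp (fun x ↦ √(f x)) 2 μ := by
  rw [memLp_two_iff_integrable_sq hf.aemeasurable.sqrt.aestronglyMeasurable]
  exact hf.congr (ae_of_all _ fun x ↦ (sq_sqrt (hf₀ x)).symm)

lemma Integrable.sqrt [IsFiniteMeasure μ] {f : α → ℝ} (hf : Integrable f μ) (hf₀ : 0 ≤ f) :
    Integrable (fun x ↦ √(f x)) μ :=
  (hf.memLp_two_sqrt hf₀).integrable one_le_two

lemma integral_sqrt_mul_le {f g : α → ℝ} (hf : Integrable f μ) (hg : Integrable g μ)
    (hf₀ : 0 ≤ f) (hg₀ : 0 ≤ g) :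
    ∫ x, √(f x * g x) ∂μ ≤ √(∫ x, f x ∂μ) * √(∫ x, g x ∂μ) := by
  have h := integral_mul_le_Lp_mul_Lq_of_nonneg Real.HolderConjugate.two_two
    (ae_of_all μ fun x ↦ sqrt_nonneg (f x)) (ae_of_all μ fun x ↦ sqrt_nonneg (g x))
    (by simpa using hf.memLp_two_sqrt hf₀) (by simpa using hg.memLp_two_sqrt hg₀)
  simp only [rpow_two, sq_sqrt (hf₀ _), sq_sqrt (hg₀ _), ← sqrt_eq_rpow] at h
  simpa only [sqrt_mul (hf₀ _)] using h

lemma setIntegral_le_integral_max_zero {f : α → ℝ} (hf : Integrable f μ) (s : Set α) :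
    ∫ x in s, f x ∂μ ≤ ∫ x, max (f x) 0 ∂μ := by
  have hf' : Integrable (fun x ↦ max (f x) 0) μ := hf.pos_part
  calc ∫ x in s, f x ∂μ ≤ ∫ x in s, max (f x) 0 ∂μ :=
        setIntegral_mono hf.integrableOn hf'.integrableOn fun x ↦ le_max_left _ _
    _ ≤ ∫ x, max (f x) 0 ∂μ := setIntegral_le_integral hf' (ae_of_all _ fun x ↦ le_max_right _ _)

lemma abs_setIntegral_le_integral_max_neg_zero {f : α → ℝ} (hf : Integrable f μ)
    (hf_zero : ∫ x, f x ∂μ = 0) (s : Set α) :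
    |∫ x in s, f x ∂μ| ≤ ∫ x, max (-f x) 0 ∂μ := by
  have h_pos_neg : ∫ x, max (f x) 0 ∂μ = ∫ x, max (-f x) 0 ∂μ := by
    have h := integral_add (g := fun x ↦ max (-f x) 0) hf hf.neg.pos_part
    rw [hf_zero, zero_add] at h
    rw [← h]
    congr 1 with x
    rcases le_total (f x) 0 with hx | hx <;> simp [hx]
  rw [abs_le, neg_le, ← integral_neg]
  exact ⟨setIntegral_le_integral_max_zero hf.neg s,
    h_pos_neg ▸ setIntegral_le_integral_max_zero hf s⟩

lemma exp_neg_integral_llr_div_two_le [IsProbabilityMeasure μ] [IsFiniteMeasure ν] (hμν : μ ≪ ν)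
    (hint : Integrable (llr μ ν) μ) :
    exp (-(∫ x, llr μ ν x ∂μ) / 2) ≤ ∫ x, √(μ.rnDeriv ν x).toReal ∂ν := by
  have h_sqrt : (fun x ↦ (μ.rnDeriv ν x).toReal • exp (-llr μ ν x / 2))
      = fun x ↦ √(μ.rnDeriv ν x).toReal :=
    funext fun x ↦ mul_exp_neg_log_div_two ENNReal.toReal_nonneg
  have h_int : Integrable (fun x ↦ exp (-llr μ ν x / 2)) μ := by
    rw [← integrable_rnDeriv_smul_iff hμν, h_sqrt]
    exact Measure.integrable_toReal_rnDeriv.sqrt fun x ↦ ENNReal.toReal_nonneg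
  calc exp (-(∫ x, llr μ ν x ∂μ) / 2) = exp (∫ x, -llr μ ν x / 2 ∂μ) := by
        rw [integral_div, integral_neg]
    _ ≤ ∫ x, exp (-llr μ ν x / 2) ∂μ :=
        convexOn_exp.map_integral_le continuous_exp.continuousOn isClosed_univ
          (ae_of_all _ fun x ↦ Set.mem_univ _) (hint.neg.div_const 2) h_int
    _ = ∫ x, √(μ.rnDeriv ν x).toReal ∂ν := by
        rw [← integral_rnDeriv_smul hμν, h_sqrt]

variable [IsProbabilityMeasure μ] [IsProbabilityMeasure ν]

lemma abs_measureReal_sub_le_integral_max_one_sub_rnDeriv (hμν : μ ≪ ν) (s : Set α) :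
    |μ.real s - ν.real s| ≤ ∫ x, max (1 - (μ.rnDeriv ν x).toReal) 0 ∂ν := by
  have hg : Integrable (fun x ↦ (μ.rnDeriv ν x).toReal - 1) ν :=
    Measure.integrable_toReal_rnDeriv.sub (integrable_const 1)
  have hg_zero : ∫ x, ((μ.rnDeriv ν x).toReal - 1) ∂ν = 0 := by
    rw [integral_sub Measure.integrable_toReal_rnDeriv (integrable_const 1),
      Measure.integral_toReal_rnDeriv hμν]
    simp
  have h := abs_setIntegral_le_integral_max_neg_zero hg hg_zero s
  simp only [neg_sub] at h
  rwa [integral_sub Measure.integrable_toReal_rnDeriv.integrableOn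
    (integrable_const 1).integrableOn, Measure.setIntegral_toReal_rnDeriv hμν, setIntegral_const, smul_eq_mul, mul_one] at h

lemma integral_sqrt_toReal_rnDeriv_le (hμν : μ ≪ ν) :
    ∫ x, √(μ.rnDeriv ν x).toReal ∂ν
      ≤ √(1 - (∫ x, max (1 - (μ.rnDeriv ν x).toReal) 0 ∂ν) ^ 2) := by
  set g : α → ℝ := fun x ↦ (μ.rnDeriv ν x).toReal
  set δ := ∫ x, max (1 - g x) 0 ∂ν
  have hg : Integrable g ν := Measure.integrable_toReal_rnDeriv
  have hg₀ : 0 ≤ g := fun x ↦ ENNReal.toReal_nonneg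
  have hδ : Integrable (fun x ↦ max (1 - g x) 0) ν := ((integrable_const 1).sub hg).pos_part
  have h_min_eq : (fun x ↦ min (g x) 1) = fun x ↦ 1 - max (1 - g x) 0 := by
    ext x; rcases le_total (g x) 1 with h | h <;> simp [h]
  have h_max_eq : (fun x ↦ max (g x) 1) = fun x ↦ g x + max (1 - g x) 0 := by
    ext x; rcases le_total (g x) 1 with h | h <;> simp [h]
  have h_min : ∫ x, min (g x) 1 ∂ν = 1 - δ := by
    rw [h_min_eq, integral_sub (integrable_const 1) hδ]
    simp [δ]
  have h_max : ∫ x, max (g x) 1 ∂ν = 1 + δ := by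
    rw [h_max_eq, integral_add hg hδ, Measure.integral_toReal_rnDeriv hμν]
    simp [δ]
  have h_min_int : Integrable (fun x ↦ min (g x) 1) ν := h_min_eq ▸ (integrable_const 1).sub hδ
  have h_max_int : Integrable (fun x ↦ max (g x) 1) ν := h_max_eq ▸ hg.add hδ
  calc ∫ x, √(g x) ∂ν = ∫ x, √(min (g x) 1 * max (g x) 1) ∂ν := by simp_rw [min_mul_max, mul_one]
    _ ≤ √(∫ x, min (g x) 1 ∂ν) * √(∫ x, max (g x) 1 ∂ν) :=
      integral_sqrt_mul_le h_min_int h_max_int (fun x ↦ le_min (hg₀ x) zero_le_one)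
        (fun x ↦ (hg₀ x).trans (le_max_left _ _))
    _ = √(1 - δ ^ 2) := by
      rw [← sqrt_mul (integral_nonneg fun x ↦ le_min (hg₀ x) zero_le_one), h_min, h_max]
      ring_nf

end MeasureTheory

theorem stmt17_general {α : Type*} [MeasurableSpace α] (μ ν : Measure α)
    [IsProbabilityMeasure μ] [IsProbabilityMeasure ν]
    (hμν : μ ≪ ν) (hint : Integrable (llr μ ν) μ)
    (s : Set α) :
    |(μ s).toReal - (ν s).toReal|
      ≤ Real.sqrt (1 - Real.exp (-∫ x, llr μ ν x ∂μ)) := by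
  set K := ∫ x, llr μ ν x ∂μ
  set δ := ∫ x, max (1 - (μ.rnDeriv ν x).toReal) 0 ∂ν
  have h_tv : |μ.real s - ν.real s| ≤ δ :=
    abs_measureReal_sub_le_integral_max_one_sub_rnDeriv hμν s
  have h_bc : exp (-K / 2) ≤ √(1 - δ ^ 2) :=
    (exp_neg_integral_llr_div_two_le hμν hint).trans (integral_sqrt_toReal_rnDeriv_le hμν)
  have h_exp : exp (-K) = exp (-K / 2) ^ 2 := by
    rw [sq, ← exp_add]
    ring_nf
  have h_sq : δ ^ 2 ≤ 1 - exp (-K) := by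
    have := (le_sqrt' (exp_pos _)).1 h_bc
    linarith
  exact h_tv.trans (le_sqrt_of_sq_le h_sq)

/-- Bretagnolle–Huber inequality: the total variation distance between two probability
measures is at most `sqrt(1 - exp(- KL(μ ‖ ν)))`, stated for each measurable set. -/
theorem stmt17 {α : Type*} [MeasurableSpace α] (μ ν : Measure α)
    [IsProbabilityMeasure μ] [IsProbabilityMeasure ν]
    (hμν : μ ≪ ν) (hint : Integrable (llr μ ν) μ)
    (s : Set α) (hs : MeasurableSet s) :
    |(μ s).toReal - (ν s).toReal|
      ≤ Real.sqrt (1 - Real.exp (-∫ x, llr μ ν x ∂μ)) :=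
  stmt17_general μ ν hμν hint s
end
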